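/- arXiv:2604.14254 — 10 statements merged into one kernel-verified Lean document; each statement's English description precedes it below -/
import Mathlib

section
/- In the world of the universal law of false promising, no agent believes promises: given background facts B1 and B3, the universal law UL implies that for every agent a, ¬ BP a. -/
/-- In the WUL of false promising, no agent believes promises. -/
theorem wul_no_one_believes_promises
    (Agent : Type) (karli jan : Agent)
    (W : Agent → Prop → Prop)
    (FP : Agent → Agent → Prop) (HTM : Agent → Prop) (BP : Agent → Prop)
    (B1 : ∃ a1, a1 ≠ karli ∧ W a1 (HTM a1))
    (B3 : ∀ a2, BP a2 → ∀ a3 a4, ¬ FP a3 a4)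
    (UL : ∀ a1, W a1 (HTM a1) → ∃ a2, FP a1 a2) :
    ∀ a : Agent, ¬ BP a := by
  intro a hBP
  obtain ⟨a1, _, hW⟩ := B1
  obtain ⟨a2, hFP⟩ := UL a1 hW
  exact B3 a hBP a1 a2 hFP
end

section
/- In the world of the universal law of false promising, false promises are an ineffective means of getting travel money: given background facts B1, B2, and B3, the universal law UL implies that for all agents a1 and a2, ¬ C (FP a1 a2) (HTM a1). -/
/-- In the WUL of false promising, false promises are an ineffective means of
getting travel money. -/
theorem wul_false_promises_ineffective
    (Agent : Type) (karli jan : Agent)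
    (W : Agent → Prop → Prop)
    (FP : Agent → Agent → Prop) (HTM : Agent → Prop) (BP : Agent → Prop)
    (C : Prop → Prop → Prop)
    (B1 : ∃ a1, a1 ≠ karli ∧ W a1 (HTM a1))
    (B2 : ∀ a1 a2, C (FP a1 a2) (HTM a1) → BP a2)
    (B3 : ∀ a2, BP a2 → ∀ a3 a4, ¬ FP a3 a4)
    (UL : ∀ a1, W a1 (HTM a1) → ∃ a2, FP a1 a2) :
    ∀ a1 a2 : Agent, ¬ C (FP a1 a2) (HTM a1) := by
  intro a1 a2 h
  obtain ⟨b, _, hb⟩ := B1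
  obtain ⟨c, hc⟩ := UL b hb
  exact B3 a2 (B2 a1 a2 h) b c hc
end

section
/- Willing the universal law of false promising precludes willing its causal law: given rules R2 and R3 and background facts B1, B2, B3, if W karli UL then ¬ W karli (C (FP karli jan) (HTM karli)). -/
/-- Willing the universal law of false promising precludes willing its causal law. -/
theorem willing_ul_precludes_willing_causal_law_fp
    (Agent : Type) (karli jan : Agent)
    (W : Agent → Prop → Prop)
    (FP : Agent → Agent → Prop) (HTM : Agent → Prop) (BP : Agent → Prop)
    (C : Prop → Prop → Prop)
    (R2 : ∀ (a : Agent) (φ : Prop), W a φ → ¬ W a (¬ φ))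
    (R3 : ∀ (a : Agent) (φ ψ : Prop), (φ → ψ) → W a φ → W a ψ)
    (B1 : ∃ a1, a1 ≠ karli ∧ W a1 (HTM a1))
    (B2 : ∀ a1 a2, C (FP a1 a2) (HTM a1) → BP a2)
    (B3 : ∀ a2, BP a2 → ∀ a3 a4, ¬ FP a3 a4)
    (hUL : W karli (∀ a1, W a1 (HTM a1) → ∃ a2, FP a1 a2)) :
    ¬ W karli (C (FP karli jan) (HTM karli)) := by
  intro hC
  obtain ⟨a1, -, ha1⟩ := B1
  have h1 : W karli (∃ a2, FP a1 a2) :=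
    R3 karli _ _ (fun h => h a1 ha1) hUL
  have h2 : W karli (¬ ∃ a2, FP a1 a2) :=
    R3 karli _ _ (fun h ⟨a2, hfp⟩ => B3 jan (B2 karli jan h) a1 a2 hfp) hC
  exact R2 karli _ h1 h2
end

section
/- In the world of the universal law of murdering job candidates, murdering is an ineffective means of securing the job: given background facts B1 and B2, the universal law UL implies that for every agent a2, ¬ C (Mur karli a2) (HO karli j a2 ∧ SP karli j). -/
/-- In the WUL of murdering job candidates, murdering is an ineffective means of
securing the job. -/
theorem wul_murder_ineffective
    (Agent Job : Type) (karli jan : Agent) (j : Job)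
    (W : Agent → Prop → Prop)
    (Mur : Agent → Agent → Prop) (HO : Agent → Job → Agent → Prop)
    (SP : Agent → Job → Prop) (C : Prop → Prop → Prop)
    (B1 : ∀ a1 a2 j1, C (Mur a1 a2) (HO a1 j1 a2 ∧ SP a1 j1) → ¬ ∃ a3, Mur a3 a1)
    (B2 : ∃ ax, ax ≠ karli ∧ W ax (HO ax j karli ∧ SP ax j))
    (UL : ∀ a1 a2 j1, W a1 (HO a1 j1 a2 ∧ SP a1 j1) → Mur a1 a2) :
    ∀ a2 : Agent, ¬ C (Mur karli a2) (HO karli j a2 ∧ SP karli j) := by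
  intro a2 hC
  obtain ⟨ax, _, hW⟩ := B2
  exact B1 karli a2 j hC ⟨ax, UL ax karli j hW⟩
end

section
/- Willing the universal law of murdering job candidates precludes willing its causal law: given rules R2 and R3 and background facts B1 and B2, if W karli UL then ¬ W karli (C (Mur karli jan) (HO karli j jan ∧ SP karli j)). -/
/-- Willing the universal law of murdering job candidates precludes willing its
causal law. -/
theorem willing_ul_precludes_willing_causal_law_murder
    (Agent Job : Type) (karli jan : Agent) (j : Job)
    (W : Agent → Prop → Prop)
    (Mur : Agent → Agent → Prop) (HO : Agent → Job → Agent → Prop)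
    (SP : Agent → Job → Prop) (C : Prop → Prop → Prop)
    (R2 : ∀ (a : Agent) (φ : Prop), W a φ → ¬ W a (¬ φ))
    (R3 : ∀ (a : Agent) (φ ψ : Prop), (φ → ψ) → W a φ → W a ψ)
    (B1 : ∀ a1 a2 j1, C (Mur a1 a2) (HO a1 j1 a2 ∧ SP a1 j1) → ¬ ∃ a3, Mur a3 a1)
    (B2 : ∃ ax, ax ≠ karli ∧ W ax (HO ax j karli ∧ SP ax j))
    (hUL : W karli (∀ a1 a2 j1, W a1 (HO a1 j1 a2 ∧ SP a1 j1) → Mur a1 a2)) :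
    ¬ W karli (C (Mur karli jan) (HO karli j jan ∧ SP karli j)) := by
  intro hC
  obtain ⟨ax, _, hWax⟩ := B2
  have h1 : W karli (∃ a3, Mur a3 karli) :=
    R3 _ _ _ (fun hul => ⟨ax, hul ax karli j hWax⟩) hUL
  have h2 : W karli (¬ ∃ a3, Mur a3 karli) :=
    R3 _ _ _ (fun hc => B1 karli jan j hc) hC
  exact R2 _ _ h1 h2
end

section
/- In the world of the universal law of never helping, karli is not alive: given background facts B1 and B2, the universal law UL implies ¬ Alive karli. -/
/-- In the WUL of never helping, karli is not alive. -/
theorem wul_karli_not_alive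
    (Agent : Type) (karli : Agent)
    (W : Agent → Prop → Prop)
    (H : Agent → Agent → Prop) (LT : Agent → Prop) (Alive : Agent → Prop)
    (B1 : ∀ a : Agent, W a (LT a))
    (B2 : ∀ a1 : Agent, Alive a1 → ∃ a2, a2 ≠ a1 ∧ H a2 a1)
    (UL : ∀ a1 a3, W a1 (LT a1) → ¬ H a1 a3) :
    ¬ Alive karli := by
  intro h
  obtain ⟨a2, _, hH⟩ := B2 karli h
  exact UL a2 karli (B1 a2) hH
end

section
/- Willing the universal law of never helping precludes willing one's own life: given rules R2 and R3 and background facts B1 and B2, if W karli UL then ¬ W karli (Alive karli). -/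
/-- Willing the universal law of never helping precludes willing one's own life. -/
theorem willing_ul_precludes_willing_life
    (Agent : Type) (karli : Agent)
    (W : Agent → Prop → Prop)
    (H : Agent → Agent → Prop) (LT : Agent → Prop) (Alive : Agent → Prop)
    (R2 : ∀ (a : Agent) (φ : Prop), W a φ → ¬ W a (¬ φ))
    (R3 : ∀ (a : Agent) (φ ψ : Prop), (φ → ψ) → W a φ → W a ψ)
    (B1 : ∀ a : Agent, W a (LT a))
    (B2 : ∀ a1 : Agent, Alive a1 → ∃ a2, a2 ≠ a1 ∧ H a2 a1)
    (hUL : W karli (∀ a1 a3, W a1 (LT a1) → ¬ H a1 a3)) :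
    ¬ W karli (Alive karli) := by
  intro hA
  have hNA : W karli (¬ Alive karli) := by
    refine R3 karli _ _ ?_ hUL
    intro hul halive
    obtain ⟨a2, _, hh⟩ := B2 karli halive
    exact hul a2 karli (B1 a2) hh
  exact R2 karli (Alive karli) hA hNA
end

section
/- The false-promising maxim produces a contradiction in conception: given rules R2 and R3, background facts B1, B2, B3, and the rule-R6 instance for M, if W karli UL and W karli M both hold, then karli wills both the causal law and its negation, i.e., W karli (C (FP karli jan) (HTM karli)) and W karli (¬ C (FP karli jan) (HTM karli)) both hold. -/
/-- The false-promising maxim produces a contradiction in conception: karli wills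
both its causal law and the negation of that causal law. -/
theorem false_promising_contradiction_in_conception
    (Agent : Type) (karli jan : Agent)
    (W : Agent → Prop → Prop)
    (FP : Agent → Agent → Prop) (HTM : Agent → Prop) (BP : Agent → Prop)
    (C : Prop → Prop → Prop)
    (R2 : ∀ (a : Agent) (φ : Prop), W a φ → ¬ W a (¬ φ))
    (R3 : ∀ (a : Agent) (φ ψ : Prop), (φ → ψ) → W a φ → W a ψ)
    (B1 : ∃ a1, a1 ≠ karli ∧ W a1 (HTM a1))
    (B2 : ∀ a1 a2, C (FP a1 a2) (HTM a1) → BP a2)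
    (B3 : ∀ a2, BP a2 → ∀ a3 a4, ¬ FP a3 a4)
    (M : Prop) (R6 : M → C (FP karli jan) (HTM karli))
    (hUL : W karli (∀ a1, W a1 (HTM a1) → ∃ a2, FP a1 a2))
    (hM : W karli M) :
    W karli (C (FP karli jan) (HTM karli)) ∧
      W karli (¬ C (FP karli jan) (HTM karli)) := by
  constructor
  · exact R3 karli M _ R6 hM
  · refine R3 karli _ _ ?_ hUL
    intro hULp hC
    obtain ⟨a1, hne, hW⟩ := B1
    obtain ⟨a2, hFP⟩ := hULp a1 hW
    exact B3 jan (B2 karli jan hC) a1 a2 hFP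
end

section
/- The murder maxim produces a contradiction in conception: given rules R2 and R3, background facts B1 and B2, and the rule-R6 instance for M, if W karli UL and W karli M both hold, then W karli (C (Mur karli jan) (HO karli j jan ∧ SP karli j)) and W karli (¬ C (Mur karli jan) (HO karli j jan ∧ SP karli j)) both hold. -/
/-- The murder maxim produces a contradiction in conception: karli wills both its
causal law and the negation of that causal law. -/
theorem murder_contradiction_in_conception
    (Agent Job : Type) (karli jan : Agent) (j : Job)
    (W : Agent → Prop → Prop)
    (Mur : Agent → Agent → Prop) (HO : Agent → Job → Agent → Prop)
    (SP : Agent → Job → Prop) (C : Prop → Prop → Prop)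
    (R2 : ∀ (a : Agent) (φ : Prop), W a φ → ¬ W a (¬ φ))
    (R3 : ∀ (a : Agent) (φ ψ : Prop), (φ → ψ) → W a φ → W a ψ)
    (B1 : ∀ a1 a2 j1, C (Mur a1 a2) (HO a1 j1 a2 ∧ SP a1 j1) → ¬ ∃ a3, Mur a3 a1)
    (B2 : ∃ ax, ax ≠ karli ∧ W ax (HO ax j karli ∧ SP ax j))
    (M : Prop) (R6 : M → C (Mur karli jan) (HO karli j jan ∧ SP karli j))
    (hUL : W karli (∀ a1 a2 j1, W a1 (HO a1 j1 a2 ∧ SP a1 j1) → Mur a1 a2))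
    (hM : W karli M) :
    W karli (C (Mur karli jan) (HO karli j jan ∧ SP karli j)) ∧
      W karli (¬ C (Mur karli jan) (HO karli j jan ∧ SP karli j)) := by
  refine ⟨R3 _ _ _ R6 hM, R3 _ _ _ ?_ hUL⟩
  intro hUL hC
  obtain ⟨ax, _, hax⟩ := B2
  exact B1 karli jan j hC ⟨ax, hUL ax karli j hax⟩
end

section
/- The never-helping maxim produces a contradiction in the will: given rules R2, R3, R4', background facts B1 and B2, and the rule-R5 instance for M, if W karli UL and W karli M both hold, then karli wills both a fact necessary to willing and its negation, i.e., W karli (Alive karli) and W karli (¬ Alive karli) both hold. -/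
/-- The never-helping maxim produces a contradiction in the will: karli wills both
being alive (a fact necessary to willing) and not being alive. -/
theorem never_helping_contradiction_in_will
    (Agent : Type) (karli : Agent)
    (W : Agent → Prop → Prop)
    (H : Agent → Agent → Prop) (LT : Agent → Prop) (Alive : Agent → Prop)
    (R2 : ∀ (a : Agent) (φ : Prop), W a φ → ¬ W a (¬ φ))
    (R3 : ∀ (a : Agent) (φ ψ : Prop), (φ → ψ) → W a φ → W a ψ)
    (R4' : ∀ (a : Agent) (φ : Prop), W a φ → Alive a)
    (B1 : ∀ a : Agent, W a (LT a))
    (B2 : ∀ a1 : Agent, Alive a1 → ∃ a2, a2 ≠ a1 ∧ H a2 a1)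
    (M : Prop) (R5 : M → W karli (LT karli))
    (hUL : W karli (∀ a1 a3, W a1 (LT a1) → ¬ H a1 a3))
    (hM : W karli M) :
    W karli (Alive karli) ∧ W karli (¬ Alive karli) := by
  constructor
  · exact R3 karli M (Alive karli) (fun m => R4' karli (LT karli) (R5 m)) hM
  · refine R3 karli _ (¬ Alive karli) ?_ hUL
    intro ul hA
    obtain ⟨a2, _, h2⟩ := B2 karli hA
    exact ul a2 karli (B1 a2) h2
end
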